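/- arXiv:1202.4175 — 4 statements merged into one kernel-verified Lean document; each statement's English description precedes it below -/
import Mathlib

section
/- Let d_i* = log((p_i − s_i)/(p_i − y_i)) / log(1 − s), where 0 ≤ y_i ≤ s_i < p_i and 0 < s < 1. Then the function f(d) = ((p_i−y_i)/(s_i−y_i))^{s_i−y_i} · ((p_i−y_i)/(p_i−s_i))^{p_i−s_i} · (1−s)^{d(p_i−s_i)} · (1−(1−s)^d)^{s_i−y_i}, for d > 0, attains its maximum at d = d_i*, and f(d_i*) = 1; in particular f(d) ≤ 1 for all d > 0. -/
/-! Writing `t = (1 - s) ^ d`, `a = p - s'`, `b = s' - y`, the function is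
`((a + b) / b) ^ b * ((a + b) / a) ^ a * t ^ a * (1 - t) ^ b`. By weighted AM–GM with weights
`a / (a + b)`, `b / (a + b)`, the product `t ^ a * (1 - t) ^ b` is maximal at `t = a / (a + b)`,
where the constant prefactor is exactly its reciprocal; and `d⋆` is the `d` with
`(1 - s) ^ d = a / (a + b)`. -/

open Real

section
variable {a b : ℝ}

theorem rpow_mul_one_sub_rpow_le (ha : 0 < a) (hb : 0 < b) {t : ℝ} (ht0 : 0 ≤ t) (ht1 : t ≤ 1) :
    t ^ a * (1 - t) ^ b ≤ (a / (a + b)) ^ a * (b / (a + b)) ^ b := by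
  have hab : 0 < a + b := add_pos ha hb
  set w₁ := a / (a + b)
  set w₂ := b / (a + b)
  have hw₁ : 0 < w₁ := div_pos ha hab
  have hw₂ : 0 < w₂ := div_pos hb hab
  have ht1' : 0 ≤ 1 - t := sub_nonneg.mpr ht1
  have amgm : (t / w₁) ^ w₁ * ((1 - t) / w₂) ^ w₂ ≤ 1 := by
    have hsum : w₁ + w₂ = 1 := by simp only [w₁, w₂]; field_simp
    calc (t / w₁) ^ w₁ * ((1 - t) / w₂) ^ w₂
        ≤ w₁ * (t / w₁) + w₂ * ((1 - t) / w₂) :=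
          geom_mean_le_arith_mean2_weighted hw₁.le hw₂.le (by positivity) (by positivity) hsum
      _ = 1 := by field_simp; ring
  have hpow := rpow_le_one (by positivity) amgm hab.le
  rw [mul_rpow (by positivity) (by positivity), ← rpow_mul (by positivity),
    ← rpow_mul (by positivity), div_mul_cancel₀ _ hab.ne', div_mul_cancel₀ _ hab.ne',
    div_rpow ht0 hw₁.le, div_rpow ht1' hw₂.le, div_mul_div_comm] at hpow
  exact (div_le_one (by positivity)).mp hpow

theorem add_div_rpow_mul_div_add_rpow_eq_one (ha : 0 < a) (hb : 0 < b) :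
    ((a + b) / b) ^ b * ((a + b) / a) ^ a * ((a / (a + b)) ^ a * (b / (a + b)) ^ b) = 1 := by
  have hab : 0 < a + b := add_pos ha hb
  rw [← inv_div a, ← inv_div b, inv_rpow (by positivity), inv_rpow (by positivity)]
  field_simp

end

theorem f_max_at_dstar_general (p s' y s : ℝ) (hys : y < s') (hsp : s' < p)
    (hs0 : 0 < s) (hs1 : s < 1)
    (f : ℝ → ℝ)
    (hf : f = fun d => ((p - y) / (s' - y)) ^ (s' - y) * ((p - y) / (p - s')) ^ (p - s') *
      (1 - s) ^ (d * (p - s')) * (1 - (1 - s) ^ d) ^ (s' - y))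
    (dstar : ℝ) (hdstar : dstar = Real.log ((p - s') / (p - y)) / Real.log (1 - s)) :
    f dstar = 1 ∧ (∀ d : ℝ, 0 < d → f d ≤ f dstar) ∧ (∀ d : ℝ, 0 < d → f d ≤ 1) := by
  set a := p - s'
  set b := s' - y
  have ha : 0 < a := sub_pos.mpr hsp
  have hb : 0 < b := sub_pos.mpr hys
  have hab : p - y = a + b := by ring
  have hs : 0 < 1 - s := sub_pos.mpr hs1
  set C := ((a + b) / b) ^ b * ((a + b) / a) ^ a
  have hf_eq : ∀ d, f d = C * (((1 - s) ^ d) ^ a * (1 - (1 - s) ^ d) ^ b) := fun d => by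
    rw [hf, ← rpow_mul hs.le, hab]; ring
  have hdstar_pow : (1 - s) ^ dstar = a / (a + b) := by
    rw [hdstar, hab]
    exact rpow_logb hs (by linarith) (by positivity)
  have hf_dstar : f dstar = 1 := by
    rw [hf_eq, hdstar_pow, one_sub_div (by positivity), add_sub_cancel_left]
    exact add_div_rpow_mul_div_add_rpow_eq_one ha hb
  have hf_le : ∀ d : ℝ, 0 < d → f d ≤ 1 := fun d hd => by
    calc f d ≤ C * ((a / (a + b)) ^ a * (b / (a + b)) ^ b) := by
          rw [hf_eq]
          exact mul_le_mul_of_nonneg_left (rpow_mul_one_sub_rpow_le ha hb (rpow_nonneg hs.le d)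
            (rpow_le_one hs.le (by linarith) hd.le)) (by positivity)
      _ = 1 := add_div_rpow_mul_div_add_rpow_eq_one ha hb
  exact ⟨hf_dstar, fun d hd => hf_dstar ▸ hf_le d hd, hf_le⟩

theorem f_max_at_dstar (p s' y s : ℝ) (hy : 0 ≤ y) (hys : y < s') (hsp : s' < p)
    (hs0 : 0 < s) (hs1 : s < 1)
    (f : ℝ → ℝ)
    (hf : f = fun d => ((p - y) / (s' - y)) ^ (s' - y) * ((p - y) / (p - s')) ^ (p - s') *
      (1 - s) ^ (d * (p - s')) * (1 - (1 - s) ^ d) ^ (s' - y))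
    (dstar : ℝ) (hdstar : dstar = Real.log ((p - s') / (p - y)) / Real.log (1 - s)) :
    f dstar = 1 ∧ (∀ d : ℝ, 0 < d → f d ≤ f dstar) ∧ (∀ d : ℝ, 0 < d → f d ≤ 1) :=
  f_max_at_dstar_general p s' y s hys hsp hs0 hs1 f hf dstar hdstar
end

section
/- There exists N such that for all n ≥ N, if p ≥ 3·log(n)/n and p ≤ 1 then for all integers i with 2 ≤ i ≤ ⌊n/2⌋, C(n, i)·(1−p)^{i(n−i)} ≤ (1−p)^{n−1}. -/
theorem g_le_t_one :
    ∃ N : ℕ, ∀ n : ℕ, N ≤ n → ∀ p : ℝ, 3 * Real.log n / n ≤ p → p ≤ 1 →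
      ∀ i : ℕ, 2 ≤ i → i ≤ n / 2 →
        (n.choose i : ℝ) * (1 - p) ^ (i * (n - i)) ≤ (1 - p) ^ (n - 1) := by
  use 12
  intro n hn p hp hp1 i hi2 hi
  have h2i : 2 * i ≤ n := by omega
  obtain ⟨b, hb⟩ : ∃ b, i = b + 2 := ⟨i - 2, by omega⟩
  obtain ⟨a, ha⟩ : ∃ a, n = i + a + 2 := ⟨n - i - 2, by omega⟩
  set m := (b + 1) * (a + 1) with hm
  have e1 : n - i = a + 2 := by omega
  have e2 : n - 1 = b + a + 3 := by omega
  have e3 : i * (n - i) = (n - 1) + m := by rw [e1, e2, hb, hm]; ring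
  -- key natural-number inequality
  have hba : b ≤ a := by omega
  have ha4 : 4 ≤ a := by omega
  have key : i * n ≤ 3 * m := by
    rw [hb, ha, hm, hb]
    nlinarith [Nat.mul_le_mul_right b hba, Nat.mul_le_mul_right b ha4]
  -- real setup
  set q := 1 - p with hq
  have hq0 : 0 ≤ q := by simp only [hq]; linarith
  have hn0 : (0 : ℝ) < n := by
    have : (12 : ℝ) ≤ n := by exact_mod_cast hn
    linarith
  have hlog : 0 ≤ Real.log n := Real.log_nonneg (by exact_mod_cast Nat.one_le_iff_ne_zero.mpr (show n ≠ 0 by omega))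
  have hqe : q ≤ Real.exp (-p) := by
    have := Real.add_one_le_exp (-p); simp only [hq]; linarith
  have hc : (n.choose i : ℝ) ≤ (n : ℝ) ^ i := by exact_mod_cast Nat.choose_le_pow n i
  have hmain : (n.choose i : ℝ) * q ^ m ≤ 1 := by
    have h1 : (n.choose i : ℝ) * q ^ m ≤ (n : ℝ) ^ i * Real.exp (-p) ^ m :=
      mul_le_mul hc (pow_le_pow_left₀ hq0 hqe m) (pow_nonneg hq0 m) (pow_nonneg hn0.le i)
    have h2 : (n : ℝ) ^ i = Real.exp (i * Real.log n) := by
      rw [Real.exp_nat_mul, Real.exp_log hn0]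
    have h3 : Real.exp (-p) ^ m = Real.exp (m * (-p)) := by rw [Real.exp_nat_mul]
    have h4 : (i : ℝ) * Real.log n ≤ p * m := by
      have hnat : (i : ℝ) * n ≤ 3 * m := by exact_mod_cast key
      have hi' : (i : ℝ) ≤ 3 * m / n := by rw [le_div_iff₀ hn0]; linarith
      have h5 : (i : ℝ) * Real.log n ≤ 3 * m / n * Real.log n :=
        mul_le_mul_of_nonneg_right hi' hlog
      have h6 : 3 * (m : ℝ) / n * Real.log n = 3 * Real.log n / n * m := by ring
      have h7 : 3 * Real.log n / n * m ≤ p * m :=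
        mul_le_mul_of_nonneg_right hp (by positivity)
      linarith
    calc (n.choose i : ℝ) * q ^ m ≤ (n : ℝ) ^ i * Real.exp (-p) ^ m := h1
      _ = Real.exp (i * Real.log n + m * (-p)) := by rw [h2, h3, Real.exp_add]
      _ ≤ 1 := Real.exp_le_one_iff.mpr (by linarith)
  calc (n.choose i : ℝ) * q ^ (i * (n - i))
      = (n.choose i : ℝ) * q ^ m * q ^ (n - 1) := by rw [e3, pow_add]; ring
    _ ≤ 1 * q ^ (n - 1) := mul_le_mul_of_nonneg_right hmain (pow_nonneg hq0 _)
    _ = q ^ (n - 1) := one_mul _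
end

section
/- There exists N such that for all n ≥ N and all real p with 3·log(n)/n ≤ p ≤ 1, the sum ∑_{i=1}^{n−1} C(n−1, i−1)·(1−p)^{i(n−i)} is at most 1.5/n. -/
/-!
The `i`-th term is at most `n ^ min (i - 1) (n - i) * exp (-p * i * (n - i))`. For
`p ≥ 3 log n / n` this is `n ^ e` with `e = min (i - 1) (n - i) - 3 i (n - i) / n`, and a
quadratic inequality in `i` gives `e ≤ 3 / n - 2` for every `1 ≤ i ≤ n - 1` (with equality at
`i = n - 1`). Summing the `n - 1` terms gives at most `n ^ (3 / n) / n`, and `n ^ (3 / n) ≤ 3 / 2`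
once `n ≥ 400`.
-/

open Real Finset

theorem Nat.choose_le_pow_min (n k : ℕ) : n.choose k ≤ n ^ min k (n - k) := by
  rcases le_or_gt k n with hkn | hnk
  · rcases le_total k (n - k) with h | h
    · simpa [min_eq_left h] using n.choose_le_pow k
    · rw [min_eq_right h, ← Nat.choose_symm hkn]
      exact n.choose_le_pow _
  · simp [Nat.choose_eq_zero_of_lt hnk]

lemma mul_min_add_two_mul_le {n i : ℕ} (hi : i ∈ Icc 1 (n - 1)) :
    n * min (i - 1) (n - i) + 2 * n ≤ 3 * (i * (n - i)) + 3 := by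
  obtain ⟨a, rfl⟩ : ∃ a, i = a + 1 := ⟨i - 1, by grind⟩
  obtain ⟨b, rfl⟩ : ∃ b, n = a + b + 2 := ⟨n - a - 2, by grind⟩
  rw [show a + b + 2 - (a + 1) = b + 1 by omega, Nat.add_sub_cancel]
  rcases le_total a (b + 1) with h | h
  · rw [min_eq_left h]; nlinarith [sq_nonneg ((a : ℤ) - 1), Nat.mul_le_mul_left a h]
  · rw [min_eq_right h]; nlinarith

lemma choose_mul_one_sub_pow_le {n i : ℕ} (hi : i ∈ Icc 1 (n - 1)) {p : ℝ}
    (hp : 3 * log n / n ≤ p) (hp1 : p ≤ 1) :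
    ((n - 1).choose (i - 1) : ℝ) * (1 - p) ^ (i * (n - i)) ≤ exp (3 * log n / n) / n ^ 2 := by
  obtain ⟨hi1, hi2⟩ := mem_Icc.mp hi
  have hn : (0 : ℝ) < n := by exact_mod_cast (by omega : 0 < n)
  set L := log n
  set m := min (i - 1) (n - i)
  set k := i * (n - i)
  have hL : 0 ≤ L := log_natCast_nonneg n
  have hchoose : ((n - 1).choose (i - 1) : ℝ) ≤ exp (m * L) := by
    rw [exp_nat_mul, exp_log hn]
    have h := (n - 1).choose_le_pow_min (i - 1)
    rw [show n - 1 - (i - 1) = n - i by omega] at h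
    calc ((n - 1).choose (i - 1) : ℝ) ≤ ((n - 1 : ℕ) : ℝ) ^ m := by exact_mod_cast h
      _ ≤ (n : ℝ) ^ m := by gcongr; exact_mod_cast n.sub_le 1
  have hpow : (1 - p) ^ k ≤ exp (-(k * (3 * L / n))) := by
    calc (1 - p) ^ k ≤ exp (-p) ^ k := by
          gcongr
          exact one_sub_le_exp_neg p
      _ = exp (k * -p) := (exp_nat_mul _ _).symm
      _ ≤ _ := by gcongr; rw [mul_neg]; gcongr
  have hexponent : m * L - k * (3 * L / n) ≤ 3 * L / n - 2 * L := by
    have hpoly : (n * m + 2 * n : ℝ) ≤ 3 * k + 3 := by exact_mod_cast mul_min_add_two_mul_le hi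
    have hdiff : m * L - k * (3 * L / n) - (3 * L / n - 2 * L) =
        (n * m + 2 * n - (3 * k + 3)) * L / n := by
      field_simp; ring
    have hnonpos : (n * m + 2 * n - (3 * k + 3)) * L / n ≤ 0 :=
      div_nonpos_of_nonpos_of_nonneg (mul_nonpos_of_nonpos_of_nonneg (by linarith) hL) hn.le
    linarith
  calc ((n - 1).choose (i - 1) : ℝ) * (1 - p) ^ k ≤ exp (m * L) * exp (-(k * (3 * L / n))) :=
        mul_le_mul hchoose hpow (pow_nonneg (by linarith) _) (exp_pos _).le
    _ = exp (m * L - k * (3 * L / n)) := by rw [← exp_add, sub_eq_add_neg]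
    _ ≤ exp (3 * L / n - 2 * L) := exp_le_exp.mpr hexponent
    _ = exp (3 * L / n) / n ^ 2 := by
        rw [exp_sub, show 2 * L = ((2 : ℕ) : ℝ) * L by norm_num, exp_nat_mul, exp_log hn]

lemma three_mul_log_div_le {x : ℝ} (hx : 400 ≤ x) : 3 * log x / x ≤ 1 / 3 := by
  have hsqrt : 20 ≤ √x := le_sqrt_of_sq_le (by linarith)
  have hlog : log x ≤ 2 * √x := by
    calc log x ≤ x ^ (1 / 2 : ℝ) / (1 / 2) := log_le_rpow_div (by linarith) one_half_pos
      _ = 2 * √x := by rw [← sqrt_eq_rpow]; ring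
  rw [div_le_iff₀ (by linarith)]
  nlinarith [sq_sqrt (by linarith : 0 ≤ x)]

theorem sum_t_le :
    ∃ N : ℕ, ∀ n : ℕ, N ≤ n → ∀ p : ℝ, 3 * Real.log n / n ≤ p → p ≤ 1 →
      ∑ i ∈ Finset.Icc 1 (n - 1), ((n - 1).choose (i - 1) : ℝ) * (1 - p) ^ (i * (n - i)) ≤
        1.5 / n := by
  refine ⟨400, fun n hn p hp hp1 => ?_⟩
  have hnR : (400 : ℝ) ≤ n := by exact_mod_cast hn
  have hexp : exp (3 * log n / n) ≤ 3 / 2 := by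
    have hx := three_mul_log_div_le hnR
    calc exp (3 * log n / n) ≤ 1 / (1 - 3 * log n / n) :=
          exp_bound_div_one_sub_of_interval (by positivity) (by linarith)
      _ ≤ 3 / 2 := by rw [div_le_iff₀ (by linarith)]; linarith
  calc ∑ i ∈ Icc 1 (n - 1), ((n - 1).choose (i - 1) : ℝ) * (1 - p) ^ (i * (n - i))
      ≤ #(Icc 1 (n - 1)) • (exp (3 * log n / n) / n ^ 2) :=
        sum_le_card_nsmul _ _ _ fun i hi => choose_mul_one_sub_pow_le hi hp hp1
    _ ≤ n * (3 / 2 / n ^ 2) := by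
        rw [Nat.card_Icc, nsmul_eq_mul]
        gcongr
        exact_mod_cast (by omega : n + 1 - 1 - 1 ≤ n)
    _ = 1.5 / n := by field_simp; norm_num
end

section
/- There exists N such that for all n ≥ N, the sum ∑_{i=1}^{n−1} C(n−1, i−1)·(1/2)^{i(n−i)} is less than (3/4)^n. -/
open Filter

private lemma choose_le_two_pow_aux (n k : ℕ) : n.choose k ≤ 2 ^ n := by
  rcases le_or_gt k n with h | h
  · calc n.choose k ≤ ∑ m ∈ Finset.range (n + 1), n.choose m :=
        Finset.single_le_sum (fun i _ => Nat.zero_le _)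
          (Finset.mem_range.mpr (Nat.lt_succ_of_le h))
    _ = 2 ^ n := Nat.sum_range_choose n
  · rw [Nat.choose_eq_zero_of_lt h]; positivity

private lemma half_pow_pred {n : ℕ} (hn : 1 ≤ n) :
    ((1:ℝ)/2) ^ (n - 1) = 2 * (1/2 : ℝ) ^ n := by
  obtain ⟨m, rfl⟩ : ∃ m, n = m + 1 := ⟨n - 1, by omega⟩
  simp [pow_succ]
  ring

private lemma term_le (n : ℕ) (hn : 4 ≤ n) (i : ℕ) (hi : i ∈ Finset.Icc 1 (n - 1)) :
    ((n - 1).choose (i - 1) : ℝ) * (1 / 2 : ℝ) ^ (i * (n - i)) ≤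
      2 * n * (1 / 2 : ℝ) ^ n := by
  obtain ⟨hi1, hi2⟩ := Finset.mem_Icc.mp hi
  have hhalf : (0:ℝ) ≤ 1/2 := by norm_num
  have hpowpos : (0:ℝ) < (1/2 : ℝ) ^ n := by positivity
  rcases eq_or_lt_of_le hi1 with h1 | h1
  · -- i = 1
    subst h1
    have he : 1 * (n - 1) = n - 1 := one_mul _
    rw [he]
    simp only [Nat.sub_self, Nat.choose_zero_right, Nat.cast_one, one_mul]
    rw [half_pow_pred (by omega)]
    have : (1:ℝ) ≤ n := by exact_mod_cast Nat.one_le_iff_ne_zero.mpr (by omega)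
    nlinarith
  · rcases eq_or_lt_of_le hi2 with h2 | h2
    · -- i = n - 1
      subst h2
      have hc : (n - 1).choose ((n - 1) - 1) = n - 1 := by
        rw [Nat.choose_symm (by omega : 1 ≤ n - 1), Nat.choose_one_right]
      have he : (n - 1) * (n - (n - 1)) = n - 1 := by
        have : n - (n - 1) = 1 := by omega
        rw [this, mul_one]
      rw [hc, he]
      rw [half_pow_pred (by omega)]
      have h1 : ((n:ℝ) - 1) ≤ n := by linarith
      have hcast : ((n - 1 : ℕ) : ℝ) = (n:ℝ) - 1 := by
        rw [Nat.cast_sub (by omega)]; norm_num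
      rw [hcast]
      nlinarith
    · -- 2 ≤ i ≤ n - 2
      have hi2' : 2 ≤ i := h1
      have hin : i ≤ n - 2 := by omega
      have hexp : 2 * n - 4 ≤ i * (n - i) := by
        have hji : n - i = (n - i - 2) + 2 := by omega
        rw [hji]
        obtain ⟨a, ha⟩ : ∃ a, i = a + 2 := ⟨i - 2, by omega⟩
        have hP : 2 * i + 2 * (n - i - 2 + 2) ≤ i * (n - i - 2 + 2) + 4 := by
          rw [ha]; nlinarith [Nat.zero_le (a * (n - i - 2))]
        have hij : i + (n - i - 2 + 2) = n := by omega
        generalize i * (n - i - 2 + 2) = P at hP ⊢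
        omega
      have hC : ((n - 1).choose (i - 1) : ℝ) ≤ (2:ℝ) ^ (n - 1) := by
        exact_mod_cast Nat.cast_le.mpr (choose_le_two_pow_aux (n-1) (i-1))
      have hP : ((1:ℝ)/2) ^ (i * (n - i)) ≤ (1/2 : ℝ) ^ (2 * n - 4) :=
        pow_le_pow_of_le_one hhalf (by norm_num) hexp
      have key : (2:ℝ) ^ (n - 1) * (1/2 : ℝ) ^ (2 * n - 4) = 8 * (1/2 : ℝ) ^ n := by
        have e1 : 2 * n - 4 = (n - 1) + (n - 3) := by omega
        have e2 : n = (n - 3) + 3 := by omega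
        rw [e1, pow_add, ← mul_assoc, ← mul_pow]
        norm_num
        rw [show n - 3 = n - 3 from rfl]
        nth_rewrite 2 [e2]
        rw [pow_add]
        norm_num
        ring
      have hterm : ((n - 1).choose (i - 1) : ℝ) * (1 / 2 : ℝ) ^ (i * (n - i)) ≤
          8 * (1/2 : ℝ) ^ n := by
        calc ((n - 1).choose (i - 1) : ℝ) * (1 / 2 : ℝ) ^ (i * (n - i))
            ≤ (2:ℝ) ^ (n - 1) * (1/2 : ℝ) ^ (2 * n - 4) := by
              apply mul_le_mul hC hP (by positivity) (by positivity)
          _ = 8 * (1/2 : ℝ) ^ n := key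
      refine hterm.trans ?_
      have : (4:ℝ) ≤ n := by exact_mod_cast hn
      nlinarith

theorem sum_t_half_lt :
    ∃ N : ℕ, ∀ n : ℕ, N ≤ n →
      ∑ i ∈ Finset.Icc 1 (n - 1), ((n - 1).choose (i - 1) : ℝ) * (1 / 2 : ℝ) ^ (i * (n - i)) <
        (3 / 4 : ℝ) ^ n := by
  have htend : Tendsto (fun n : ℕ => 2 * ((n:ℝ) ^ 2 * (2/3 : ℝ) ^ n)) atTop (nhds 0) := by
    have := tendsto_pow_const_mul_const_pow_of_lt_one 2 (r := (2/3 : ℝ)) (by norm_num) (by norm_num)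
    simpa using this.const_mul 2
  have hev : ∀ᶠ n : ℕ in atTop, 2 * ((n:ℝ) ^ 2 * (2/3 : ℝ) ^ n) < 1 :=
    htend.eventually_lt_const one_pos
  obtain ⟨N0, hN0⟩ := eventually_atTop.mp hev
  refine ⟨max N0 4, fun n hn => ?_⟩
  have hn4 : 4 ≤ n := le_trans (le_max_right _ _) hn
  have hnN0 : N0 ≤ n := le_trans (le_max_left _ _) hn
  have hsum : ∑ i ∈ Finset.Icc 1 (n - 1), ((n - 1).choose (i - 1) : ℝ) * (1 / 2 : ℝ) ^ (i * (n - i))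
      ≤ (n - 1 : ℕ) * (2 * n * (1 / 2 : ℝ) ^ n) := by
    have := Finset.sum_le_card_nsmul (Finset.Icc 1 (n - 1))
      (fun i => ((n - 1).choose (i - 1) : ℝ) * (1 / 2 : ℝ) ^ (i * (n - i)))
      (2 * n * (1 / 2 : ℝ) ^ n) (fun i hi => term_le n hn4 i hi)
    simpa [Nat.card_Icc, nsmul_eq_mul] using this
  have hlt : ((n - 1 : ℕ) : ℝ) * (2 * n * (1 / 2 : ℝ) ^ n) < 2 * (n:ℝ)^2 * (1 / 2 : ℝ) ^ n := by
    have hc : ((n - 1 : ℕ) : ℝ) < n := by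
      have : ((n - 1 : ℕ) : ℝ) = (n:ℝ) - 1 := by rw [Nat.cast_sub (by omega)]; norm_num
      rw [this]; linarith
    have hpos : (0:ℝ) < 2 * n * (1/2:ℝ)^n := by
      have : (0:ℝ) < n := by exact_mod_cast (by omega : 0 < n)
      positivity
    nlinarith
  have hfin : 2 * (n:ℝ)^2 * (1 / 2 : ℝ) ^ n ≤ (3/4 : ℝ) ^ n := by
    have hkey := hN0 n hnN0
    have hsplit : ((1:ℝ)/2) ^ n = (2/3 : ℝ) ^ n * (3/4 : ℝ) ^ n := by
      rw [← mul_pow]; norm_num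
    rw [hsplit]
    have hpos34 : (0:ℝ) < (3/4 : ℝ) ^ n := by positivity
    calc 2 * (n:ℝ)^2 * ((2/3 : ℝ) ^ n * (3/4 : ℝ) ^ n)
        = (2 * ((n:ℝ)^2 * (2/3 : ℝ) ^ n)) * (3/4 : ℝ) ^ n := by ring
      _ ≤ 1 * (3/4 : ℝ) ^ n := by
          exact mul_le_mul_of_nonneg_right hkey.le (le_of_lt hpos34)
      _ = (3/4 : ℝ) ^ n := one_mul _
  calc ∑ i ∈ Finset.Icc 1 (n - 1), ((n - 1).choose (i - 1) : ℝ) * (1 / 2 : ℝ) ^ (i * (n - i))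
      ≤ (n - 1 : ℕ) * (2 * n * (1 / 2 : ℝ) ^ n) := hsum
    _ < 2 * (n:ℝ)^2 * (1 / 2 : ℝ) ^ n := hlt
    _ ≤ (3/4 : ℝ) ^ n := hfin
end
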